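/- arXiv:1604.06657 — 2 statements merged into one kernel-verified Lean document; each statement's English description precedes it below -/
import Mathlib

section
/- Let a > 0 and α = √(a/2). The map x(u,v) = e^{αu+v/(2α)}(cos(αu−v/(2α)) c₁ + sin(αu−v/(2α)) c₂) + e^{−(αu+v/(2α))}(cos(αu−v/(2α)) c₃ + sin(αu−v/(2α)) c₄), with c₁ = ½(1,0,1,0), c₂ = ½(0,1,0,1), c₃ = ½(1,0,−1,0), c₄ = ½(0,1,0,−1) in E⁴₂, satisfies ⟨x,x⟩ = 1, ⟨x_u,x_u⟩ = ⟨x_v,x_v⟩ = 0 and ⟨x_u,x_v⟩ = −1 everywhere. -/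
noncomputable def mink2 (x y : Fin 4 → ℝ) : ℝ :=
  x 0 * y 0 + x 1 * y 1 - x 2 * y 2 - x 3 * y 3

noncomputable def c₁ : Fin 4 → ℝ := ![1/2, 0, 1/2, 0]
noncomputable def c₂ : Fin 4 → ℝ := ![0, 1/2, 0, 1/2]
noncomputable def c₃ : Fin 4 → ℝ := ![1/2, 0, -(1/2), 0]
noncomputable def c₄ : Fin 4 → ℝ := ![0, 1/2, 0, -(1/2)]

noncomputable def xMap (a : ℝ) (u v : ℝ) : Fin 4 → ℝ :=
  let α := Real.sqrt (a / 2)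
  Real.exp (α * u + v / (2 * α)) •
    (Real.cos (α * u - v / (2 * α)) • c₁ + Real.sin (α * u - v / (2 * α)) • c₂) +
  Real.exp (-(α * u + v / (2 * α))) •
    (Real.cos (α * u - v / (2 * α)) • c₃ + Real.sin (α * u - v / (2 * α)) • c₄)

noncomputable def xU (a : ℝ) (u v : ℝ) : Fin 4 → ℝ :=
  fun i => deriv (fun t => xMap a t v i) u

noncomputable def xV (a : ℝ) (u v : ℝ) : Fin 4 → ℝ :=
  fun i => deriv (fun t => xMap a u t i) v


/-!
Writing `p = αu + v/(2α)` and `q = αu - v/(2α)`, the map is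
`x = (cosh p cos q, cosh p sin q, sinh p cos q, sinh p sin q)`,
so `⟨x, x⟩ = cosh² p - sinh² p = 1`.
Its partial derivatives `x_p`, `x_q` form an orthonormal frame of signature `(-, +)`, and by the
chain rule `x_u = α (x_p + x_q)` and `x_v = (x_p - x_q) / (2α)`, which are therefore null with
`⟨x_u, x_v⟩ = -2α / (2α) = -1`.
-/

open Real

noncomputable def cylinder (p q : ℝ) : Fin 4 → ℝ :=
  ![cosh p * cos q, cosh p * sin q, sinh p * cos q, sinh p * sin q]

noncomputable def cylinderDp (p q : ℝ) : Fin 4 → ℝ :=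
  ![sinh p * cos q, sinh p * sin q, cosh p * cos q, cosh p * sin q]

noncomputable def cylinderDq (p q : ℝ) : Fin 4 → ℝ :=
  ![-(cosh p * sin q), cosh p * cos q, -(sinh p * sin q), sinh p * cos q]

lemma mink2_cylinder_self (p q : ℝ) : mink2 (cylinder p q) (cylinder p q) = 1 := by
  simp only [mink2, cylinder, Matrix.cons_val]
  linear_combination (cos q ^ 2 + sin q ^ 2) * cosh_sq p + sin_sq_add_cos_sq q

lemma mink2_cylinder_frame (p q m n m' n' : ℝ) :
    mink2 (m • cylinderDp p q + n • cylinderDq p q)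
      (m' • cylinderDp p q + n' • cylinderDq p q) = n * n' - m * m' := by
  simp only [mink2, cylinderDp, cylinderDq, Pi.add_apply, Pi.smul_apply, smul_eq_mul,
    Matrix.cons_val]
  linear_combination ((n * n' - m * m') * (cos q ^ 2 + sin q ^ 2)) * cosh_sq p +
    (n * n' - m * m') * sin_sq_add_cos_sq q

lemma hasDerivAt_cylinder {p q : ℝ → ℝ} {p' q' t : ℝ} (hp : HasDerivAt p p' t)
    (hq : HasDerivAt q q' t) :
    HasDerivAt (fun s => cylinder (p s) (q s))
      (p' • cylinderDp (p t) (q t) + q' • cylinderDq (p t) (q t)) t := by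
  rw [hasDerivAt_pi]
  intro i
  fin_cases i
  · exact (hp.cosh.mul hq.cos).congr_deriv (by simp [cylinderDp, cylinderDq]; ring)
  · exact (hp.cosh.mul hq.sin).congr_deriv (by simp [cylinderDp, cylinderDq]; ring)
  · exact (hp.sinh.mul hq.cos).congr_deriv (by simp [cylinderDp, cylinderDq]; ring)
  · exact (hp.sinh.mul hq.sin).congr_deriv (by simp [cylinderDp, cylinderDq]; ring)

section

variable {a α : ℝ} (hα : α = √(a / 2))
include hα

lemma xMap_eq_cylinder (u v : ℝ) :
    xMap a u v = cylinder (α * u + v / (2 * α)) (α * u - v / (2 * α)) := by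
  subst hα
  funext i
  fin_cases i <;> simp [xMap, c₁, c₂, c₃, c₄, cylinder, cosh_eq, sinh_eq] <;> ring

lemma xU_eq (u v : ℝ) :
    xU a u v = α • cylinderDp (α * u + v / (2 * α)) (α * u - v / (2 * α)) +
      α • cylinderDq (α * u + v / (2 * α)) (α * u - v / (2 * α)) := by
  have hp : HasDerivAt (fun t => α * t + v / (2 * α)) α u := by
    simpa using ((hasDerivAt_id u).const_mul α).add_const (v / (2 * α))
  have hq : HasDerivAt (fun t => α * t - v / (2 * α)) α u := by
    simpa using ((hasDerivAt_id u).const_mul α).sub_const (v / (2 * α))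
  funext i
  simp only [xU, xMap_eq_cylinder hα]
  exact (hasDerivAt_pi.1 (hasDerivAt_cylinder hp hq) i).deriv

lemma xV_eq (u v : ℝ) :
    xV a u v = (2 * α)⁻¹ • cylinderDp (α * u + v / (2 * α)) (α * u - v / (2 * α)) +
      (-(2 * α)⁻¹) • cylinderDq (α * u + v / (2 * α)) (α * u - v / (2 * α)) := by
  have hp : HasDerivAt (fun t => α * u + t / (2 * α)) (2 * α)⁻¹ v := by
    simpa [div_eq_mul_inv, mul_comm] using ((hasDerivAt_id v).div_const (2 * α)).const_add (α * u)
  have hq : HasDerivAt (fun t => α * u - t / (2 * α)) (-(2 * α)⁻¹) v := by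
    simpa [div_eq_mul_inv, mul_comm] using ((hasDerivAt_id v).div_const (2 * α)).const_sub (α * u)
  funext i
  simp only [xV, xMap_eq_cylinder hα]
  exact (hasDerivAt_pi.1 (hasDerivAt_cylinder hp hq) i).deriv

end

theorem stmt_12 (a : ℝ) (ha : 0 < a) :
    (∀ u v : ℝ, mink2 (xMap a u v) (xMap a u v) = 1) ∧
    (∀ u v : ℝ, mink2 (xU a u v) (xU a u v) = 0) ∧
    (∀ u v : ℝ, mink2 (xV a u v) (xV a u v) = 0) ∧
    (∀ u v : ℝ, mink2 (xU a u v) (xV a u v) = -1) := by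
  obtain ⟨α, hα⟩ : ∃ α, α = √(a / 2) := ⟨_, rfl⟩
  have hα0 : α ≠ 0 := hα ▸ (sqrt_pos.2 (half_pos ha)).ne'
  refine ⟨fun u v => ?_, fun u v => ?_, fun u v => ?_, fun u v => ?_⟩
  · rw [xMap_eq_cylinder hα, mink2_cylinder_self]
  · rw [xU_eq hα, mink2_cylinder_frame, sub_self]
  · rw [xV_eq hα, mink2_cylinder_frame]
    ring
  · rw [xU_eq hα, xV_eq hα, mink2_cylinder_frame]
    field_simp
    ring
end

section
/- Let z : ℝ → E^{m+1}₁ be a smooth curve with ⟨z,z⟩ = 0 and ⟨z',z'⟩ = 4 identically. Then for u+v ≠ 0, the map x(u,v) = z(u)/(u+v) − z'(u)/2 satisfies ⟨x(u,v), x(u,v)⟩ = 1, i.e. x takes values in the pseudo-sphere S^m₁(1). -/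
theorem stmt_14 (m : ℕ)
    (B : LinearMap.BilinForm ℝ (Fin (m + 1) → ℝ))
    (hsymm : ∀ x y, B x y = B y x)
    (z : ℝ → Fin (m + 1) → ℝ)
    (hz : ContDiff ℝ (⊤ : ℕ∞) z)
    (z' : ℝ → Fin (m + 1) → ℝ)
    (hz' : ∀ u i, z' u i = deriv (fun t => z t i) u)
    (hnull : ∀ u, B (z u) (z u) = 0)
    (hspeed : ∀ u, B (z' u) (z' u) = 4)
    (x : ℝ → ℝ → Fin (m + 1) → ℝ)
    (hx : ∀ u v, x u v = (u + v)⁻¹ • z u - (1 / 2 : ℝ) • z' u) :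
    ∀ u v : ℝ, u + v ≠ 0 → B (x u v) (x u v) = 1 := by
  have hdiff : Differentiable ℝ z := hz.differentiable (by simp)
  -- z has derivative z'
  have hzder : ∀ w, HasDerivAt z (z' w) w := by
    intro w
    have h := (hdiff w).hasDerivAt
    have h' := hasDerivAt_pi.mp h
    rw [hasDerivAt_pi]
    intro i
    have : z' w i = deriv z w i := by rw [hz', (h' i).deriv]
    rw [this]
    exact h' i
  -- continuous bilinear version of B
  let L : (Fin (m + 1) → ℝ) →ₗ[ℝ] ((Fin (m + 1) → ℝ) →L[ℝ] ℝ) :=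
    { toFun := fun a => LinearMap.toContinuousLinearMap (B a)
      map_add' := by intro a b; ext y; simp
      map_smul' := by intro c a; ext y; simp }
  let Lc := LinearMap.toContinuousLinearMap L
  have hLc : ∀ a b, Lc a b = B a b := fun a b => rfl
  have hbil : IsBoundedBilinearMap ℝ (fun p : (Fin (m + 1) → ℝ) × (Fin (m + 1) → ℝ) => Lc p.1 p.2) :=
    Lc.isBoundedBilinearMap
  -- key: B (z w) (z' w) = 0
  have key : ∀ w, B (z w) (z' w) = 0 := by
    intro w
    have hF := (hbil.hasFDerivAt (z w, z w)).comp_hasDerivAt w (HasDerivAt.prodMk (hzder w) (hzder w))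
    have hconst : HasDerivAt (fun t => Lc (z t) (z t)) 0 w := by
      have : (fun t => Lc (z t) (z t)) = fun _ => (0 : ℝ) := by
        funext t; rw [hLc, hnull]
      rw [this]
      exact hasDerivAt_const w 0
    have huniq := hF.unique hconst
    simp only [hbil.deriv_apply] at huniq
    rw [hLc, hLc] at huniq
    rw [hsymm (z' w) (z w)] at huniq
    linarith
  intro u v huv
  rw [hx]
  simp only [map_sub, map_smul, LinearMap.sub_apply, LinearMap.smul_apply, smul_eq_mul,
    hnull, hspeed, key, hsymm (z' u) (z u)]
  ring
end
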